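/- arXiv:1211.0031 — 6 statements merged into one kernel-verified Lean document; each statement's English description precedes it below -/
import Mathlib

section
/- Let X be a set, let S ⊆ Bin(X) be a distributive set, and let * ∈ S be invertible in the monoid Bin(X), with inverse *̄. Then S ∪ {*̄} is also a distributive set. -/
/-!
Right distributivity of `(f, g)` says that every right translation `(· g c)` is an endomorphism
of `(X, f)`, and invertibility of `*` says that the right translations by `*` are bijections whose
inverses are the right translations by `*̄`. Inverting these translations in the distributive
laws that involve `*` yields the ones that involve `*̄`: for `(f, *̄)` from `(f, *)`, for `(*̄, g)`
from `(*, g)`, and for `(*̄, *̄)` by applying both steps to `(*, *)`.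
-/

universe u

/-- `BinOp X` is the set of all binary operations on `X`. -/
def BinOp (X : Type u) : Type u := X → X → X

namespace BinOp

variable {X : Type u}

/-- `Bin(X)` is a monoid with composition `a (*₁*₂) b = (a *₁ b) *₂ b` and
identity the right-trivial operation `a *₀ b = a`. -/
instance instMonoid : Monoid (BinOp X) where
  mul f g := fun a b => g (f a b) b
  one := fun a _ => a
  mul_assoc _ _ _ := rfl
  one_mul _ := rfl
  mul_one _ := rfl

/-- The pair `(f, g)` is right distributive: `(a * b) *' c = (a *' c) * (b *' c)`. -/
def RightDistrib (f g : BinOp X) : Prop :=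
  ∀ a b c : X, g (f a b) c = f (g a c) (g b c)

/-- A set of binary operations is distributive if every pair of its elements
(possibly equal) is right distributive. -/
def DistribSet (S : Set (BinOp X)) : Prop :=
  ∀ f ∈ S, ∀ g ∈ S, RightDistrib f g

end BinOp

namespace BinOp

variable {X : Type u}

theorem inv_apply_apply (u : (BinOp X)ˣ) (a b : X) :
    (↑u⁻¹ : BinOp X) ((u : BinOp X) a b) b = a :=
  congrFun (congrFun u.mul_inv a) b

theorem apply_inv_apply (u : (BinOp X)ˣ) (a b : X) :
    (u : BinOp X) ((↑u⁻¹ : BinOp X) a b) b = a :=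
  congrFun (congrFun u.inv_mul a) b

theorem RightDistrib.units_inv_right {f : BinOp X} {u : (BinOp X)ˣ}
    (h : RightDistrib f u) : RightDistrib f ↑u⁻¹ := by
  intro a b c
  set v : BinOp X := ↑u⁻¹
  calc v (f a b) c
      = v (f ((u : BinOp X) (v a c) c) ((u : BinOp X) (v b c) c)) c := by
        rw [apply_inv_apply, apply_inv_apply]
    _ = v ((u : BinOp X) (f (v a c) (v b c)) c) c := by rw [h]
    _ = f (v a c) (v b c) := inv_apply_apply u _ _

theorem RightDistrib.units_inv_left {u : (BinOp X)ˣ} {g : BinOp X}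
    (h : RightDistrib u g) : RightDistrib ↑u⁻¹ g := by
  intro a b c
  set v : BinOp X := ↑u⁻¹
  have hu : g a c = (u : BinOp X) (g (v a b) c) (g b c) := by
    rw [← h, apply_inv_apply]
  calc g (v a b) c
      = v ((u : BinOp X) (g (v a b) c) (g b c)) (g b c) := (inv_apply_apply u _ _).symm
    _ = v (g a c) (g b c) := by rw [← hu]

theorem RightDistrib.units_inv {u : (BinOp X)ˣ} (h : RightDistrib (u : BinOp X) u) :
    RightDistrib (↑u⁻¹ : BinOp X) ↑u⁻¹ :=
  h.units_inv_right.units_inv_left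

theorem DistribSet.union_singleton {S : Set (BinOp X)} {g : BinOp X} (hS : DistribSet S)
    (hright : ∀ f ∈ S, RightDistrib f g) (hleft : ∀ f ∈ S, RightDistrib g f)
    (hself : RightDistrib g g) : DistribSet (S ∪ {g}) := by
  rintro f₁ (hf₁ | rfl) f₂ (hf₂ | rfl)
  exacts [hS f₁ hf₁ f₂ hf₂, hright f₁ hf₁, hleft f₂ hf₂, hself]

end BinOp

open BinOp in
/-- If `S` is a distributive set and `* ∈ S` is invertible in the monoid `Bin(X)`,
then `S ∪ {*̄}` is also a distributive set. -/
theorem distribSet_union_inv {X : Type u} (S : Set (BinOp X)) (hS : DistribSet S)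
    (u : (BinOp X)ˣ) (hu : (u : BinOp X) ∈ S) :
    DistribSet (S ∪ {((u⁻¹ : (BinOp X)ˣ) : BinOp X)}) :=
  hS.union_singleton (fun f hf => (hS f hf u hu).units_inv_right)
    (fun g hg => (hS u hu g hg).units_inv_left) (hS u hu u hu).units_inv
end

section
/- Let X be a set and let S ⊆ Bin(X) be a distributive set. Then the submonoid M(S) of Bin(X) generated by S is itself a distributive set (a distributive monoid). -/
universe u

/-!
For fixed `g`, the operations `f` with `(f, g)` right distributive form a submonoid of `Bin(X)`,
and so do, for fixed `f`, the operations `g`. Closing `S` first in the second slot and then in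
the first therefore keeps every pair right distributive.
-/

namespace BinOp

variable {X : Type u}

theorem RightDistrib.one_left (g : BinOp X) : RightDistrib 1 g := fun _ _ _ => rfl

theorem RightDistrib.one_right (f : BinOp X) : RightDistrib f 1 := fun _ _ _ => rfl

theorem RightDistrib.mul_left {f f' g : BinOp X} (hf : RightDistrib f g) (hf' : RightDistrib f' g) :
    RightDistrib (f * f') g := by
  intro a b c
  show g (f' (f a b) b) c = f' (f (g a c) (g b c)) (g b c)
  rw [hf', hf]

theorem RightDistrib.mul_right {f g g' : BinOp X} (hg : RightDistrib f g) (hg' : RightDistrib f g') :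
    RightDistrib f (g * g') := by
  intro a b c
  show g' (g (f a b) c) c = f (g' (g a c) c) (g' (g b c) c)
  rw [hg, hg']

def rightDistribFirst (g : BinOp X) : Submonoid (BinOp X) where
  carrier := {f | RightDistrib f g}
  one_mem' := RightDistrib.one_left g
  mul_mem' := RightDistrib.mul_left

def rightDistribSecond (f : BinOp X) : Submonoid (BinOp X) where
  carrier := {g | RightDistrib f g}
  one_mem' := RightDistrib.one_right f
  mul_mem' := RightDistrib.mul_right

end BinOp

open BinOp in
/-- If `S` is a distributive set, then the submonoid of `Bin(X)` generated by `S`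
is itself a distributive set. -/
theorem distribSet_submonoid_closure {X : Type u} (S : Set (BinOp X)) (hS : DistribSet S) :
    DistribSet ((Submonoid.closure S : Submonoid (BinOp X)) : Set (BinOp X)) := by
  have distrib_of_mem_left : ∀ f ∈ S, Submonoid.closure S ≤ rightDistribSecond f := fun f hf =>
    Submonoid.closure_le.mpr fun g hg => hS f hf g hg
  intro f hf g hg
  have hclosure : Submonoid.closure S ≤ rightDistribFirst g :=
    Submonoid.closure_le.mpr fun f' hf' => distrib_of_mem_left f' hf' hg
  exact hclosure hf
end

section
/- Let X be a set and let *α, *β ∈ Bin(X) be such that *β is idempotent (a *β a = a for all a ∈ X) and the pair (*α, *β) is right distributive, i.e. (a *α b) *β c = (a *β c) *α (b *β c) for all a, b, c ∈ X. Then *α and *β commute in the monoid Bin(X): (a *α b) *β b = (a *β b) *α b for all a, b ∈ X. -/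
universe u

open BinOp in
/-- If `*β` is idempotent and the pair `(*α, *β)` is right distributive, then
`*α` and `*β` commute in the monoid `Bin(X)`:
`(a *α b) *β b = (a *β b) *α b` for all `a, b`. -/
theorem idempotent_rightDistrib_comm {X : Type u} (f g : BinOp X)
    (hg : ∀ a : X, g a a = a) (hd : RightDistrib f g) :
    ∀ a b : X, g (f a b) b = f (g a b) b := fun a b =>
  calc g (f a b) b = f (g a b) (g b b) := hd a b b
    _ = f (g a b) b := by rw [hg]
end

section
/- Let X be a set and let M ⊆ Bin(X) be a distributive monoid (a submonoid of Bin(X) which is a distributive set). If *β ∈ M is an idempotent operation (a *β a = a for all a ∈ X), then *β lies in the center of M: *α*β = *β*α in Bin(X) for every *α ∈ M. -/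
universe u

namespace BinOp

variable {X : Type u}

theorem RightDistrib.mul_comm_of_idempotent {f g : BinOp X} (hfg : RightDistrib f g)
    (hg : ∀ a : X, g a a = a) : f * g = g * f := by
  funext a b
  show g (f a b) b = f (g a b) b
  rw [hfg a b b, hg b]

end BinOp

open BinOp in
/-- If `M` is a distributive monoid and `*β ∈ M` is idempotent, then `*β` is in the
center of `M`: `*α*β = *β*α` in `Bin(X)` for every `*α ∈ M`. -/
theorem idempotent_mem_center {X : Type u} (M : Submonoid (BinOp X))
    (hM : DistribSet (M : Set (BinOp X)))
    (g : BinOp X) (hgM : g ∈ M) (hg : ∀ a : X, g a a = a) :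
    ∀ f ∈ M, f * g = g * f :=
  fun f hf => (hM f hf g hgM).mul_comm_of_idempotent hg
end

section
/- Let G be a group and, for each g ∈ G, define the binary operation *_g on G by a *_g b = a b⁻¹ g b. Then the map φ^reg : G → Bin(G), φ^reg(g) = *_g, is a monoid homomorphism from G to the monoid Bin(G): φ^reg(1) is the right-trivial operation a *₀ b = a, and for all g₁, g₂ ∈ G, *_{g₁g₂} equals the composition *_{g₁}*_{g₂}, i.e. a *_{g₁g₂} b = (a *_{g₁} b) *_{g₂} b for all a, b ∈ G. -/
universe u

/-- The regular embedding operation: `a *_g b = a b⁻¹ g b`. -/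
def regularOp {G : Type u} [Group G] (g : G) : BinOp G := fun a b => a * b⁻¹ * g * b

namespace BinOp

variable {X : Type u}

@[simp]
lemma one_apply (a b : X) : (1 : BinOp X) a b = a := rfl

@[simp]
lemma mul_apply (f g : BinOp X) (a b : X) : (f * g) a b = g (f a b) b := rfl

end BinOp

section regularOp

variable {G : Type u} [Group G]

/-- Multiplicativity of `g ↦ *_g` is inherited from conjugation. -/
lemma regularOp_apply_eq_mul_conj (g a b : G) : regularOp g a b = a * MulAut.conj b⁻¹ g := by
  simp [regularOp, mul_assoc]

lemma regularOp_one : regularOp (1 : G) = 1 := by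
  funext a b
  simp [regularOp_apply_eq_mul_conj]

lemma regularOp_mul (g₁ g₂ : G) : regularOp (g₁ * g₂) = regularOp g₁ * regularOp g₂ := by
  funext a b
  simp only [BinOp.mul_apply, regularOp_apply_eq_mul_conj, map_mul, mul_assoc]

end regularOp

/-- The map `φ^reg : g ↦ *_g` is a monoid homomorphism from `G` to `Bin(G)`:
`φ^reg(1)` is the right-trivial operation, and `*_{g₁g₂} = *_{g₁}*_{g₂}`,
i.e. `a *_{g₁g₂} b = (a *_{g₁} b) *_{g₂} b`. -/
theorem regularOp_monoidHom (G : Type u) [Group G] :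
    regularOp (1 : G) = (1 : BinOp G) ∧
    ∀ g₁ g₂ : G, regularOp (g₁ * g₂) = regularOp g₁ * regularOp g₂ :=
  ⟨regularOp_one, regularOp_mul⟩
end

section
/- Let X = {0,1,2,3,4,5} and define the binary operations *_τ and *_σ on X by the tables (with i * j in row i, column j): for *_τ the rows are (1,1,3,5,5,3), (0,0,4,2,2,4), (3,3,5,1,1,5), (2,2,0,4,4,0), (5,5,1,3,3,1), (4,4,2,0,0,2); for *_σ the rows are (2,4,2,4,2,4), (5,3,5,3,5,3), (4,0,4,0,4,0), (1,5,1,5,1,5), (0,2,0,2,0,2), (3,1,3,1,3,1). Then {*_τ, *_σ} is a distributive set of invertible operations in Bin(X), and the subgroup of the group of units of Bin(X) generated by *_τ and *_σ is non-abelian (it is isomorphic to the dihedral group D_{2·3} ≅ S_3). -/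
/-! Both tables are invertible in `Bin(X)`: `τ` has order 2, `σ` has order 3, and `σ τ = τ σ⁻¹`.
These are the defining relations of `D₃`, so `r ↦ σ`, `s ↦ τ` extends to a homomorphism from
`D₃` onto `⟨τ, σ⟩`; it is injective because `σ` has order exactly 3 and `τ ∉ ⟨σ⟩`, an element of
order 2 not fitting in a group of order 3. Distributivity and the relations are finite table
checks. -/

universe u

/-- Berman's reflection operation `*_τ` on `X = {0,…,5}`, given by its table
(row `i`, column `j` is `i *_τ j`). -/
def tauOp : BinOp (Fin 6) := fun i j =>
  ![![1,1,3,5,5,3],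
    ![0,0,4,2,2,4],
    ![3,3,5,1,1,5],
    ![2,2,0,4,4,0],
    ![5,5,1,3,3,1],
    ![4,4,2,0,0,2]] i j

/-- Berman's `3`-cycle operation `*_σ` on `X = {0,…,5}`, given by its table
(row `i`, column `j` is `i *_σ j`). -/
def sigmaOp : BinOp (Fin 6) := fun i j =>
  ![![2,4,2,4,2,4],
    ![5,3,5,3,5,3],
    ![4,0,4,0,4,0],
    ![1,5,1,5,1,5],
    ![0,2,0,2,0,2],
    ![3,1,3,1,3,1]] i j

namespace DihedralGroup

variable {n : ℕ} {G : Type*} [Group G] {r s : G}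

variable (r) in
def zmodZPow (hr : r ^ n = 1) (i : ZMod n) : G :=
  (ZMod.lift n ⟨zmultiplesHom (Additive G) (.ofMul r), by simp [← ofMul_pow, hr]⟩ i).toMul

lemma zmodZPow_intCast (hr : r ^ n = 1) (k : ℤ) : zmodZPow r hr k = r ^ k := by
  simp [zmodZPow, ZMod.lift_coe]

lemma zmodZPow_add (hr : r ^ n = 1) (i j : ZMod n) :
    zmodZPow r hr (i + j) = zmodZPow r hr i * zmodZPow r hr j := by
  simp [zmodZPow, toMul_add]

lemma zmodZPow_mul_eq_mul_zmodZPow_neg (hr : r ^ n = 1) (hsr : r * s = s * r⁻¹) (i : ZMod n) :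
    zmodZPow r hr i * s = s * zmodZPow r hr (-i) := by
  obtain ⟨k, rfl⟩ := ZMod.intCast_surjective i
  rw [← Int.cast_neg, zmodZPow_intCast, zmodZPow_intCast, zpow_neg, ← inv_zpow]
  exact (SemiconjBy.zpow_right hsr.symm k).symm

def lift (hr : r ^ n = 1) (hs : s ^ 2 = 1) (hsr : r * s = s * r⁻¹) : DihedralGroup n →* G where
  toFun
    | .r i => zmodZPow r hr i
    | .sr i => s * zmodZPow r hr i
  map_one' := by
    change zmodZPow r hr 0 = 1
    simpa using zmodZPow_intCast hr 0
  map_mul' := by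
    have hss : s * s = 1 := by rw [← sq, hs]
    rintro (i | i) (j | j)
    · exact zmodZPow_add hr i j
    · change s * _ = _ * (s * _)
      rw [← mul_assoc, zmodZPow_mul_eq_mul_zmodZPow_neg hr hsr, mul_assoc, ← zmodZPow_add,
        neg_add_eq_sub]
    · change s * _ = s * _ * _
      rw [mul_assoc, ← zmodZPow_add]
    · change zmodZPow r hr (j - i) = s * _ * (s * _)
      rw [mul_assoc, ← mul_assoc (zmodZPow r hr i), zmodZPow_mul_eq_mul_zmodZPow_neg hr hsr,
        ← mul_assoc, ← mul_assoc, hss, one_mul, ← zmodZPow_add, neg_add_eq_sub]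

section lift

variable (hr : r ^ n = 1) (hs : s ^ 2 = 1) (hsr : r * s = s * r⁻¹)

@[simp] lemma lift_r (i : ZMod n) : lift hr hs hsr (.r i) = zmodZPow r hr i := rfl

@[simp] lemma lift_sr (i : ZMod n) : lift hr hs hsr (.sr i) = s * zmodZPow r hr i := rfl

lemma range_lift : (lift hr hs hsr).range = Subgroup.closure {s, r} := by
  have hpow (i : ZMod n) : zmodZPow r hr i ∈ Subgroup.closure {s, r} := by
    obtain ⟨k, rfl⟩ := ZMod.intCast_surjective i
    exact zmodZPow_intCast hr k ▸ zpow_mem (Subgroup.subset_closure (by simp)) k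
  apply le_antisymm
  · rintro _ ⟨i | i, rfl⟩
    · exact hpow i
    · exact mul_mem (Subgroup.subset_closure (by simp)) (hpow i)
  · rw [Subgroup.closure_le]
    rintro _ (rfl | rfl)
    · exact ⟨.sr 0, by simpa using zmodZPow_intCast hr 0⟩
    · exact ⟨.r 1, by simpa using zmodZPow_intCast hr 1⟩

lemma lift_injective (hrn : orderOf r = n) (hs' : s ∉ Subgroup.zpowers r) :
    Function.Injective (lift hr hs hsr) := by
  rw [injective_iff_map_eq_one]
  rintro (i | i) h <;> obtain ⟨k, rfl⟩ := ZMod.intCast_surjective i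
  · rw [lift_r, zmodZPow_intCast, ← orderOf_dvd_iff_zpow_eq_one, hrn,
      ← ZMod.intCast_zmod_eq_zero_iff_dvd] at h
    rw [h, r_zero]
  · rw [lift_sr, zmodZPow_intCast, ← eq_inv_iff_mul_eq_one, ← zpow_neg] at h
    exact absurd (h ▸ Subgroup.zpow_mem_zpowers r (-k)) hs'

end lift

end DihedralGroup

theorem nonempty_closure_mulEquiv_dihedralGroup {n : ℕ} {G : Type*} [Group G] {r s : G}
    (hr : orderOf r = n) (hs : s ^ 2 = 1) (hsr : r * s = s * r⁻¹)
    (hs' : s ∉ Subgroup.zpowers r) : Nonempty (Subgroup.closure {s, r} ≃* DihedralGroup n) := by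
  have hrn : r ^ n = 1 := hr ▸ pow_orderOf_eq_one r
  rw [← DihedralGroup.range_lift hrn hs hsr]
  exact ⟨(MonoidHom.ofInjective (DihedralGroup.lift_injective hrn hs hsr hr hs')).symm⟩

namespace BinOp

lemma distribSet_pair_iff {X : Type u} {f g : BinOp X} :
    DistribSet {f, g} ↔
      RightDistrib f f ∧ RightDistrib f g ∧ RightDistrib g f ∧ RightDistrib g g := by
  simp only [DistribSet, Set.mem_insert_iff, Set.mem_singleton_iff, forall_eq_or_imp, forall_eq]
  tauto

variable {X : Type u} [Fintype X] [DecidableEq X]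

instance : DecidableEq (BinOp X) := inferInstanceAs (DecidableEq (X → X → X))

instance : DecidableRel (RightDistrib (X := X)) := fun f g => by
  unfold RightDistrib; infer_instance

end BinOp

def tauUnit : (BinOp (Fin 6))ˣ := .ofPowEqOne tauOp 2 (by decide) two_ne_zero

def sigmaUnit : (BinOp (Fin 6))ˣ := .ofPowEqOne sigmaOp 3 (by decide) three_ne_zero

lemma tauUnit_sq : tauUnit ^ 2 = 1 := Units.pow_ofPowEqOne _ _

lemma orderOf_tauUnit : orderOf tauUnit = 2 :=
  orderOf_eq_prime tauUnit_sq (by rw [Ne, Units.ext_iff]; decide)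

lemma orderOf_sigmaUnit : orderOf sigmaUnit = 3 :=
  orderOf_eq_prime (Units.pow_ofPowEqOne _ _) (by rw [Ne, Units.ext_iff]; decide)

lemma sigmaUnit_mul_tauUnit : sigmaUnit * tauUnit = tauUnit * sigmaUnit⁻¹ := by
  rw [Units.ext_iff]; decide

lemma tauUnit_notMem_zpowers_sigmaUnit : tauUnit ∉ Subgroup.zpowers sigmaUnit := fun h => by
  have h23 := orderOf_dvd_of_mem_zpowers h
  rw [orderOf_tauUnit, orderOf_sigmaUnit] at h23
  norm_num at h23

open BinOp in
/-- `{*_τ, *_σ}` is a distributive set of invertible operations in `Bin(X)` for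
`|X| = 6`, and the subgroup of the group of units of `Bin(X)` generated by them is
non-abelian, isomorphic to the dihedral group `D_{2·3} ≅ S₃`. -/
theorem berman_nonabelian_distributive_subgroup :
    ∃ uτ uσ : (BinOp (Fin 6))ˣ,
      (uτ : BinOp (Fin 6)) = tauOp ∧
      (uσ : BinOp (Fin 6)) = sigmaOp ∧
      DistribSet {tauOp, sigmaOp} ∧
      (∃ a ∈ Subgroup.closure {uτ, uσ}, ∃ b ∈ Subgroup.closure {uτ, uσ}, a * b ≠ b * a) ∧
      Nonempty ((Subgroup.closure {uτ, uσ} : Subgroup (BinOp (Fin 6))ˣ) ≃* DihedralGroup 3) := by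
  have hdistrib : DistribSet {tauOp, sigmaOp} := distribSet_pair_iff.mpr (by decide)
  have hnoncomm : tauUnit * sigmaUnit ≠ sigmaUnit * tauUnit := by
    rw [Ne, Units.ext_iff]; decide
  refine ⟨tauUnit, sigmaUnit, rfl, rfl, hdistrib,
    ⟨tauUnit, Subgroup.subset_closure (by simp), sigmaUnit, Subgroup.subset_closure (by simp),
      hnoncomm⟩, ?_⟩
  exact nonempty_closure_mulEquiv_dihedralGroup orderOf_sigmaUnit tauUnit_sq sigmaUnit_mul_tauUnit
    tauUnit_notMem_zpowers_sigmaUnit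
end
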